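/- In a mixed graph admitting a mixed edge cover, there exists a maximum mix-size matching forest F* such that every vertex not covered by F* is incident to some edge of E. -/

import Mathlib

variable {V : Type*} [Fintype V] [DecidableEq V]

/-- Number of elements of `FE` covering `v` (an edge covers both its endpoints). -/
def edgeCoverCount (FE : Finset (Sym2 V)) (v : V) : ℕ :=
  (FE.filter (fun e => v ∈ e)).card

/-- Number of arcs of `FA` with head `v`. -/
def arcCoverCount (FA : Finset (V × V)) (v : V) : ℕ :=
  (FA.filter (fun a => a.2 = v)).card

/-- The multiset of undirected edges underlying the edge set `FE` and arc set `FA`. -/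
def underlyingEdges (FE : Finset (Sym2 V)) (FA : Finset (V × V)) : Multiset (Sym2 V) :=
  FE.val + FA.val.map (fun a => s(a.1, a.2))

/-- A multiset of undirected edges is acyclic (a forest) iff every nonempty sub-multiset
touches strictly more vertices than its number of edges. -/
def AcyclicEdgeMultiset (M : Multiset (Sym2 V)) : Prop :=
  ∀ S : Multiset (Sym2 V), S ≤ M → S ≠ 0 →
    Multiset.card S < (Finset.univ.filter (fun v : V => ∃ e ∈ S.toFinset, v ∈ e)).card

/-- A matching forest: acyclic underlying undirected graph and every vertex covered at most
once (endpoints of edges and heads of arcs count as covered). -/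
def IsMatchingForest (FE : Finset (Sym2 V)) (FA : Finset (V × V)) : Prop :=
  AcyclicEdgeMultiset (underlyingEdges FE FA) ∧
    ∀ v : V, edgeCoverCount FE v + arcCoverCount FA v ≤ 1

/-- Reachability by a directed path (possibly of length 0) using arcs of `B`. -/
def arcReach (B : Finset (V × V)) : V → V → Prop :=
  Relation.ReflTransGen (fun u v => (u, v) ∈ B)

/-- A branching: each vertex has in-degree at most one and there is no directed cycle. -/
def IsBranching (B : Finset (V × V)) : Prop :=
  (∀ v : V, arcCoverCount B v ≤ 1) ∧ ∀ a ∈ B, ¬ arcReach B a.2 a.1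

/-- The root set of a branching: vertices with in-degree zero. -/
def rootSet (B : Finset (V × V)) : Finset V :=
  Finset.univ.filter (fun v => arcCoverCount B v = 0)

/-- A matching: every vertex is covered by at most one edge. -/
def IsMatching (FE : Finset (Sym2 V)) : Prop := ∀ v : V, edgeCoverCount FE v ≤ 1

/-- The set of vertices covered by some edge of `FE`. -/
def edgeCovered (FE : Finset (Sym2 V)) : Finset V :=
  Finset.univ.filter (fun v => 0 < edgeCoverCount FE v)

/-- A mixed edge cover: every vertex is reachable by a directed path (possibly trivial)
in the arc part from an endpoint of some edge of the edge part. -/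
def IsMixedEdgeCover (FE : Finset (Sym2 V)) (FA : Finset (V × V)) : Prop :=
  ∀ v : V, ∃ u : V, (∃ e ∈ FE, u ∈ e) ∧ arcReach FA u v

/-- A mixed covering forest: acyclic underlying undirected graph and every vertex covered
at least once. -/
def IsMixedCoveringForest (FE : Finset (Sym2 V)) (FA : Finset (V × V)) : Prop :=
  AcyclicEdgeMultiset (underlyingEdges FE FA) ∧
    ∀ v : V, 1 ≤ edgeCoverCount FE v + arcCoverCount FA v

/-- The mix-size ⟨F⟩ = |F ∩ E| + |F ∩ A| / 2. -/
def mixSize (FE : Finset (Sym2 V)) (FA : Finset (V × V)) : ℚ :=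
  (FE.card : ℚ) + (FA.card : ℚ) / 2

/-!
Among the maximum matching forests take one, `F`, with the fewest stranded vertices (uncovered
and incident to no edge of `E`), and suppose `v` is stranded. Some `A`-path runs from an endpoint
of an `E`-edge to `v`; let `(w, v)` be its last arc. If `w` and `v` lie in different trees of `F`,
adding `(w, v)` raises the mix-size by `1/2`. Otherwise the tree path from the uncovered vertex `v`
to `w` runs along arcs in their forward direction, so it enters `w` by an arc `(q, w)`; trading
`(q, w)` for `(w, v)` keeps the mix-size, covers `v` and uncovers only `w`, so by minimality `w` is
stranded in the new forest. Walking back along the path we reach its first vertex, which is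
incident to an edge of `E`.
-/

open Finset SimpleGraph

def touchedVertices (S : Multiset (Sym2 V)) : Finset V :=
  univ.filter (fun v : V => ∃ e ∈ S.toFinset, v ∈ e)

lemma mem_touchedVertices {S : Multiset (Sym2 V)} {v : V} :
    v ∈ touchedVertices S ↔ ∃ e ∈ S, v ∈ e := by
  simp [touchedVertices]

lemma touchedVertices_mono {S T : Multiset (Sym2 V)} (h : S ≤ T) :
    touchedVertices S ⊆ touchedVertices T := fun x hx => by
  obtain ⟨e, he, hxe⟩ := mem_touchedVertices.1 hx
  exact mem_touchedVertices.2 ⟨e, Multiset.mem_of_le h he, hxe⟩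

lemma insert_touchedVertices_subset_cons {e : Sym2 V} {x : V} (hx : x ∈ e)
    {S T : Multiset (Sym2 V)} (hS : S ≤ T) :
    insert x (touchedVertices S) ⊆ touchedVertices (e ::ₘ T) :=
  insert_subset (mem_touchedVertices.2 ⟨e, Multiset.mem_cons_self _ _, hx⟩)
    (touchedVertices_mono (hS.trans (Multiset.le_cons_self _ _)))

section

variable {α : Type*}

abbrev edgeGraph (M : Multiset (Sym2 α)) : SimpleGraph α := fromEdgeSet {e | e ∈ M}

lemma edgeGraph_erase [DecidableEq α] {M : Multiset (Sym2 α)} (hM : M.Nodup) (e : Sym2 α) :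
    edgeGraph (M.erase e) = (edgeGraph M).deleteEdges {e} := by
  ext x y
  simp only [fromEdgeSet_adj, Set.mem_ofPred_eq, hM.mem_erase_iff, deleteEdges_adj,
    Set.mem_singleton_iff]
  tauto

lemma edgeGraph_reachable_of_mem {M : Multiset (Sym2 α)} {e : Sym2 α} (he : e ∈ M)
    {x y : α} (hx : x ∈ e) (hy : y ∈ e) : (edgeGraph M).Reachable x y := by
  rcases eq_or_ne x y with rfl | hxy
  · rfl
  · refine Adj.reachable ((fromEdgeSet_adj _).2 ⟨?_, hxy⟩)
    rwa [← (Sym2.mem_and_mem_iff hxy).1 ⟨hx, hy⟩]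

end

namespace AcyclicEdgeMultiset

variable {M S : Multiset (Sym2 V)}

lemma mono (hM : AcyclicEdgeMultiset M) (hS : S ≤ M) : AcyclicEdgeMultiset S :=
  fun T hT => hM T (hT.trans hS)

lemma card_lt_card_insert_touchedVertices (hM : AcyclicEdgeMultiset M) (hS : S ≤ M) (x : V) :
    Multiset.card S < #(insert x (touchedVertices S)) := by
  rcases eq_or_ne S 0 with rfl | hS0
  · simp
  · exact (hM S hS hS0).trans_le (card_le_card (subset_insert _ _))

lemma nodup (hM : AcyclicEdgeMultiset M) : M.Nodup := by
  refine Multiset.nodup_iff_ne_cons_cons.2 fun e T hT => ?_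
  have hle : e ::ₘ e ::ₘ 0 ≤ M := hT ▸ by simp
  have hlt : Multiset.card (e ::ₘ e ::ₘ 0) < #(touchedVertices (e ::ₘ e ::ₘ 0)) :=
    hM _ hle (by simp)
  induction e using Sym2.ind with
  | _ a b =>
    have hsub : touchedVertices (s(a, b) ::ₘ s(a, b) ::ₘ 0) ⊆ {a, b} := by
      intro v hv
      obtain ⟨f, hf, hvf⟩ := mem_touchedVertices.1 hv
      simp only [Multiset.mem_cons, Multiset.notMem_zero, or_false, or_self] at hf
      subst hf
      simpa using hvf
    have := (card_le_card hsub).trans card_le_two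
    simp only [Multiset.card_cons, Multiset.card_zero] at hlt
    omega

lemma isAcyclic (hM : AcyclicEdgeMultiset M) : (edgeGraph M).IsAcyclic := by
  intro u c hc
  have hle : (c.edges : Multiset (Sym2 V)) ≤ M := by
    refine (Multiset.le_iff_subset (Multiset.coe_nodup.2 hc.edges_nodup)).2 fun e he => ?_
    have := c.edges_subset_edgeSet he
    simp_all
  have hlt : Multiset.card (c.edges : Multiset (Sym2 V)) <
      #(touchedVertices (c.edges : Multiset (Sym2 V))) := hM _ hle (by simpa using hc.not_nil)
  have hsub : touchedVertices (c.edges : Multiset (Sym2 V)) ⊆ c.support.tail.toFinset := by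
    intro x hx
    obtain ⟨e, he, hxe⟩ := mem_touchedVertices.1 hx
    have hx := c.mem_support_of_mem_edges (by simpa using he) hxe
    rcases c.mem_support_iff.1 hx with rfl | hx
    · exact List.mem_toFinset.2 (c.end_mem_tail_support hc.not_nil)
    · exact List.mem_toFinset.2 hx
  have := card_le_card hsub
  rw [List.toFinset_card_of_nodup hc.support_nodup, List.length_tail, Walk.length_support] at this
  rw [Multiset.coe_card, Walk.length_edges] at hlt
  omega

/-- A sub-multiset through the new edge splits into the edges in the component of `a` and the
rest; acyclicity of `M` bounds each part, and the new edge joins the two vertex sets. -/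
lemma cons (hM : AcyclicEdgeMultiset M) {a b : V} (hr : ¬ (edgeGraph M).Reachable a b) :
    AcyclicEdgeMultiset (s(a, b) ::ₘ M) := by
  classical
  intro S hS hS0
  by_cases hab : s(a, b) ∈ S
  swap
  · exact hM S ((Multiset.le_cons_of_notMem hab).1 hS) hS0
  obtain ⟨S', rfl⟩ := Multiset.exists_cons_of_mem hab
  have hS' : S' ≤ M := (Multiset.cons_le_cons_iff _).1 hS
  set P := fun f : Sym2 V => ∃ x ∈ f, (edgeGraph M).Reachable a x
  set S₁ := S'.filter P
  set S₂ := S'.filter (fun f => ¬ P f)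
  have h₁ : ∀ x ∈ insert a (touchedVertices S₁), (edgeGraph M).Reachable a x := by
    intro x hx
    rcases mem_insert.1 hx with rfl | hx
    · rfl
    obtain ⟨f, hf, hxf⟩ := mem_touchedVertices.1 hx
    obtain ⟨hfS', y, hyf, hay⟩ := Multiset.mem_filter.1 hf
    exact hay.trans (edgeGraph_reachable_of_mem (Multiset.mem_of_le hS' hfS') hyf hxf)
  have h₂ : ∀ x ∈ insert b (touchedVertices S₂), ¬ (edgeGraph M).Reachable a x := by
    intro x hx hax
    rcases mem_insert.1 hx with rfl | hx
    · exact hr hax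
    obtain ⟨f, hf, hxf⟩ := mem_touchedVertices.1 hx
    exact (Multiset.mem_filter.1 hf).2 ⟨x, hxf, hax⟩
  have hdisj : Disjoint (insert a (touchedVertices S₁)) (insert b (touchedVertices S₂)) :=
    disjoint_left.2 fun x hx hx' => h₂ x hx' (h₁ x hx)
  have hunion : insert a (touchedVertices S₁) ∪ insert b (touchedVertices S₂) ⊆
      touchedVertices (s(a, b) ::ₘ S') :=
    union_subset
      (insert_touchedVertices_subset_cons (Sym2.mem_mk_left a b) (Multiset.filter_le _ _))
      (insert_touchedVertices_subset_cons (Sym2.mem_mk_right a b) (Multiset.filter_le _ _))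
  have hcard₁ : Multiset.card S₁ < #(insert a (touchedVertices S₁)) :=
    hM.card_lt_card_insert_touchedVertices ((Multiset.filter_le _ _).trans hS') a
  have hcard₂ : Multiset.card S₂ < #(insert b (touchedVertices S₂)) :=
    hM.card_lt_card_insert_touchedVertices ((Multiset.filter_le _ _).trans hS') b
  have hsplit : Multiset.card S' = Multiset.card S₁ + Multiset.card S₂ := by
    rw [← Multiset.card_add, Multiset.filter_add_not]
  have := card_union_of_disjoint hdisj ▸ card_le_card hunion
  change Multiset.card (s(a, b) ::ₘ S') < #(touchedVertices _)
  rw [Multiset.card_cons]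
  omega

end AcyclicEdgeMultiset

section UnderlyingEdges

variable {α : Type*} {FE : Finset (Sym2 α)} {FA : Finset (α × α)}

lemma mk_mem_underlyingEdges {x y : α} :
    s(x, y) ∈ underlyingEdges FE FA ↔ s(x, y) ∈ FE ∨ (x, y) ∈ FA ∨ (y, x) ∈ FA := by
  simp only [underlyingEdges, Multiset.mem_add, mem_val, Multiset.mem_map, Sym2.eq_iff]
  aesop

lemma underlyingEdges_insert [DecidableEq α] {p : α × α} (hp : p ∉ FA) :
    underlyingEdges FE (insert p FA) = s(p.1, p.2) ::ₘ underlyingEdges FE FA := by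
  simp [underlyingEdges, insert_val_of_notMem hp]

lemma underlyingEdges_erase [DecidableEq α] {p : α × α} (hp : p ∈ FA) :
    underlyingEdges FE (FA.erase p) = (underlyingEdges FE FA).erase s(p.1, p.2) := by
  conv_rhs => rw [← insert_erase hp, underlyingEdges_insert (notMem_erase p FA)]
  exact (Multiset.erase_cons_head _ _).symm

end UnderlyingEdges

section CoverCounts

variable {α : Type*} [DecidableEq α] {FE : Finset (Sym2 α)} {FA : Finset (α × α)}

lemma edgeCoverCount_pos {e : Sym2 α} {v : α} (he : e ∈ FE) (hv : v ∈ e) :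
    0 < edgeCoverCount FE v :=
  card_pos.2 ⟨e, mem_filter.2 ⟨he, hv⟩⟩

lemma arcCoverCount_pos {a : α × α} (ha : a ∈ FA) : 0 < arcCoverCount FA a.2 :=
  card_pos.2 ⟨a, mem_filter.2 ⟨ha, rfl⟩⟩

lemma arcCoverCount_insert {p : α × α} (hp : p ∉ FA) (y : α) :
    arcCoverCount (insert p FA) y = arcCoverCount FA y + if p.2 = y then 1 else 0 := by
  unfold arcCoverCount
  rw [filter_insert]
  split_ifs <;> simp [card_insert_of_notMem, hp]

lemma arcCoverCount_erase_add {p : α × α} (hp : p ∈ FA) (y : α) :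
    arcCoverCount (FA.erase p) y + (if p.2 = y then 1 else 0) = arcCoverCount FA y := by
  conv_rhs => rw [← insert_erase hp, arcCoverCount_insert (notMem_erase p FA)]

lemma arcCoverCount_exchange {q w v : α} (hq : (q, w) ∈ FA) (hwv : (w, v) ∉ FA) (y : α) :
    arcCoverCount (insert (w, v) (FA.erase (q, w))) y + (if w = y then 1 else 0) =
      arcCoverCount FA y + if v = y then 1 else 0 := by
  rw [arcCoverCount_insert (fun h => hwv (mem_of_mem_erase h)), add_right_comm,
    arcCoverCount_erase_add hq]

lemma notMem_of_arcCoverCount_eq_zero {v : α} (hv : arcCoverCount FA v = 0) (w : α) :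
    (w, v) ∉ FA := fun h => (arcCoverCount_pos h).ne' hv

end CoverCounts

namespace IsMatchingForest

variable {FE : Finset (Sym2 V)} {FA : Finset (V × V)}

lemma empty : IsMatchingForest (∅ : Finset (Sym2 V)) (∅ : Finset (V × V)) :=
  ⟨fun S hS hS0 => absurd (Multiset.le_zero.1 (by simpa [underlyingEdges] using hS)) hS0,
    fun v => by simp [edgeCoverCount, arcCoverCount]⟩

lemma eq_of_snd_eq (hF : IsMatchingForest FE FA) {a b : V × V} (ha : a ∈ FA) (hb : b ∈ FA)
    (hab : a.2 = b.2) : a = b := by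
  have : arcCoverCount FA a.2 ≤ 1 := by have := hF.2 a.2; omega
  exact card_le_one.1 this a (mem_filter.2 ⟨ha, rfl⟩) b (mem_filter.2 ⟨hb, hab.symm⟩)

lemma snd_notMem_of_mem (hF : IsMatchingForest FE FA) {a : V × V} (ha : a ∈ FA) {e : Sym2 V}
    (he : e ∈ FE) : a.2 ∉ e := fun h => by
  have := hF.2 a.2
  have := edgeCoverCount_pos he h
  have := arcCoverCount_pos ha
  omega

/-- A path leaving a vertex that no element of the forest enters from the path itself runs
along arcs in their forward direction, since each vertex is entered at most once. -/
lemma darts_mem_of_isPath (hF : IsMatchingForest FE FA) {y w : V}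
    (P : (edgeGraph (underlyingEdges FE FA)).Walk y w) (hP : P.IsPath)
    (hyE : ∀ e ∈ FE, y ∉ e) (hyA : ∀ a ∈ FA, a.2 = y → a.1 ∉ P.support) :
    ∀ d ∈ P.darts, d.toProd ∈ FA := by
  induction P with
  | nil => simp
  | @cons y z w h R ih =>
    have hyz : (y, z) ∈ FA := by
      rcases mk_mem_underlyingEdges.1 ((fromEdgeSet_adj _).1 h).1 with h' | h' | h'
      · exact absurd (Sym2.mem_mk_left _ _) (hyE _ h')
      · exact h'
      · exact absurd (by simp) (hyA _ h' rfl)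
    rw [Walk.cons_isPath_iff] at hP
    intro d hd
    rcases List.mem_cons.1 (Walk.darts_cons h R ▸ hd) with rfl | hd
    · exact hyz
    · refine ih hP.1 (fun e he hz => hF.snd_notMem_of_mem hyz he hz) (fun a ha haz => ?_) d hd
      rw [hF.eq_of_snd_eq ha hyz haz]
      exact hP.2

lemma exists_arc_not_reachable_erase (hF : IsMatchingForest FE FA) {v w : V}
    (hv : edgeCoverCount FE v + arcCoverCount FA v = 0) (hvw : v ≠ w)
    (hr : (edgeGraph (underlyingEdges FE FA)).Reachable v w) :
    ∃ q, (q, w) ∈ FA ∧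
      ¬ (edgeGraph ((underlyingEdges FE FA).erase s(q, w))).Reachable v w := by
  obtain ⟨P, hP⟩ := hr.exists_isPath
  have hnil : ¬ P.Nil := Walk.not_nil_of_ne hvw
  have hqw : (P.penultimate, w) ∈ FA := by
    refine hF.darts_mem_of_isPath P hP (fun e he hve => ?_) (fun a ha hav => ?_) _
      (P.lastDart_mem_darts hnil)
    · have := edgeCoverCount_pos he hve; omega
    · have := arcCoverCount_pos ha; rw [hav] at this; omega
  refine ⟨P.penultimate, hqw, fun hvw' => ?_⟩
  have hbridge := isAcyclic_iff_forall_isBridge.1 hF.1.isAcyclic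
    ((mem_edgeSet _).2 (P.adj_penultimate hnil))
  rw [edgeGraph_erase hF.1.nodup] at hvw'
  have hvq : ((edgeGraph (underlyingEdges FE FA)).deleteEdges {s(P.penultimate, w)}).Reachable
      v P.penultimate := by
    refine reachable_deleteEdges_iff_exists_walk.2 ⟨P.dropLast, fun he => ?_⟩
    have := hP.isTrail.edges_nodup
    rw [← Walk.concat_dropLast (P.adj_penultimate hnil), Walk.edges_concat,
      List.nodup_concat] at this
    exact this.1 he
  exact isBridge_iff.1 hbridge (hvq.symm.trans hvw')

lemma insert_arc (hF : IsMatchingForest FE FA) {w v : V}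
    (hv : edgeCoverCount FE v + arcCoverCount FA v = 0)
    (hr : ¬ (edgeGraph (underlyingEdges FE FA)).Reachable w v) :
    IsMatchingForest FE (insert (w, v) FA) := by
  have hwv : (w, v) ∉ FA := notMem_of_arcCoverCount_eq_zero (by omega) w
  refine ⟨underlyingEdges_insert hwv ▸ hF.1.cons hr, fun y => ?_⟩
  rw [arcCoverCount_insert hwv]
  have := hF.2 y
  split_ifs with h
  · obtain rfl : v = y := h
    omega
  · omega

lemma exchange_arc (hF : IsMatchingForest FE FA) {w v : V}
    (hv : edgeCoverCount FE v + arcCoverCount FA v = 0) (hvw : v ≠ w)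
    (hr : (edgeGraph (underlyingEdges FE FA)).Reachable v w) :
    ∃ q, (q, w) ∈ FA ∧ IsMatchingForest FE (insert (w, v) (FA.erase (q, w))) := by
  obtain ⟨q, hq, hsep⟩ := hF.exists_arc_not_reachable_erase hv hvw hr
  have hwv : (w, v) ∉ FA := notMem_of_arcCoverCount_eq_zero (by omega) w
  refine ⟨q, hq, ?_, fun y => ?_⟩
  · rw [underlyingEdges_insert (fun h => hwv (mem_of_mem_erase h)), underlyingEdges_erase hq]
    exact (hF.1.mono (Multiset.erase_le _ _)).cons fun h => hsep h.symm
  · have hy := hF.2 y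
    have hcount := arcCoverCount_exchange hq hwv y
    rcases eq_or_ne v y with rfl | hvy
    · rw [if_neg hvw.symm, if_pos rfl] at hcount
      omega
    · rw [if_neg hvy] at hcount
      split_ifs at hcount <;> omega

end IsMatchingForest

section Optimal

variable (E : Finset (Sym2 V)) (A : Finset (V × V))

def IsMaxMatchingForest (FE : Finset (Sym2 V)) (FA : Finset (V × V)) : Prop :=
  FE ⊆ E ∧ FA ⊆ A ∧ IsMatchingForest FE FA ∧
    ∀ FE' FA', FE' ⊆ E → FA' ⊆ A → IsMatchingForest FE' FA' →
      mixSize FE' FA' ≤ mixSize FE FA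

def strandedVertices (FE : Finset (Sym2 V)) (FA : Finset (V × V)) : Finset V :=
  univ.filter fun v => edgeCoverCount FE v + arcCoverCount FA v = 0 ∧ ∀ e ∈ E, v ∉ e

def IsOptimalMatchingForest (FE : Finset (Sym2 V)) (FA : Finset (V × V)) : Prop :=
  IsMaxMatchingForest E A FE FA ∧ ∀ FE' FA', IsMaxMatchingForest E A FE' FA' →
    #(strandedVertices E FE FA) ≤ #(strandedVertices E FE' FA')

lemma exists_isOptimalMatchingForest : ∃ FE FA, IsOptimalMatchingForest E A FE FA := by
  classical
  let T := (univ : Finset (Finset (Sym2 V) × Finset (V × V))).filter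
    fun F => F.1 ⊆ E ∧ F.2 ⊆ A ∧ IsMatchingForest F.1 F.2
  have hT : ∀ {FE FA}, (FE, FA) ∈ T ↔ FE ⊆ E ∧ FA ⊆ A ∧ IsMatchingForest FE FA := by
    simp [T]
  obtain ⟨F, hFT, hFmax⟩ := T.exists_max_image (fun F => mixSize F.1 F.2)
    ⟨(∅, ∅), hT.2 ⟨empty_subset _, empty_subset _, IsMatchingForest.empty⟩⟩
  obtain ⟨G, hGT, hGmin⟩ := (T.filter fun G => mixSize G.1 G.2 = mixSize F.1 F.2)
    |>.exists_min_image (fun G => #(strandedVertices E G.1 G.2)) ⟨F, mem_filter.2 ⟨hFT, rfl⟩⟩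
  obtain ⟨hGT, hGF⟩ := mem_filter.1 hGT
  obtain ⟨hGE, hGA, hGf⟩ := hT.1 hGT
  have hGmax : IsMaxMatchingForest E A G.1 G.2 :=
    ⟨hGE, hGA, hGf, fun FE' FA' h₁ h₂ h₃ => hGF ▸ hFmax (FE', FA') (hT.2 ⟨h₁, h₂, h₃⟩)⟩
  refine ⟨G.1, G.2, hGmax, fun FE' FA' ⟨h₁, h₂, h₃, hH⟩ => ?_⟩
  have hHT := hT.2 ⟨h₁, h₂, h₃⟩
  exact hGmin (FE', FA')
    (mem_filter.2 ⟨hHT, le_antisymm (hFmax _ hHT) (hGF ▸ hH _ _ hGE hGA hGf)⟩)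

variable {E A}

lemma IsOptimalMatchingForest.exists_mem_strandedVertices_of_arc {FE : Finset (Sym2 V)}
    {FA : Finset (V × V)} (hF : IsOptimalMatchingForest E A FE FA) {w v : V} (hwv : (w, v) ∈ A)
    (hv : v ∈ strandedVertices E FE FA) :
    ∃ FA', IsOptimalMatchingForest E A FE FA' ∧ w ∈ strandedVertices E FE FA' := by
  rcases eq_or_ne v w with rfl | hvw
  · exact ⟨FA, hF, hv⟩
  obtain ⟨⟨hFE, hFA, hmf, hle⟩, hmin⟩ := hF
  obtain ⟨-, hv0, hvE⟩ := mem_filter.1 hv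
  have hwvFA : (w, v) ∉ FA := notMem_of_arcCoverCount_eq_zero (by omega) w
  have hr : (edgeGraph (underlyingEdges FE FA)).Reachable v w := by
    by_contra hr
    have := hle _ _ hFE (insert_subset hwv hFA) (hmf.insert_arc hv0 fun h => hr h.symm)
    simp only [mixSize, card_insert_of_notMem hwvFA] at this
    push_cast at this
    linarith
  obtain ⟨q, hq, hmf'⟩ := hmf.exchange_arc hv0 hvw hr
  set FA' := insert (w, v) (FA.erase (q, w))
  have hsize : mixSize FE FA' = mixSize FE FA := by
    rw [mixSize, mixSize, card_insert_of_notMem (fun h => hwvFA (mem_of_mem_erase h)),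
      card_erase_add_one hq]
  have hmax' : IsMaxMatchingForest E A FE FA' :=
    ⟨hFE, insert_subset hwv ((erase_subset _ _).trans hFA), hmf',
      fun FE' FA'' h₁ h₂ h₃ => hsize ▸ hle FE' FA'' h₁ h₂ h₃⟩
  have hsub : strandedVertices E FE FA' ⊆ insert w ((strandedVertices E FE FA).erase v) := by
    intro y hy
    obtain ⟨-, hy0, hyE⟩ := mem_filter.1 hy
    rcases eq_or_ne y w with rfl | hyw
    · exact mem_insert_self _ _
    have hcount : arcCoverCount FA' y + (if w = y then 1 else 0) =
        arcCoverCount FA y + if v = y then 1 else 0 := arcCoverCount_exchange hq hwvFA y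
    rw [if_neg hyw.symm] at hcount
    split_ifs at hcount with hvy
    · omega
    · exact mem_insert_of_mem
        (mem_erase.2 ⟨Ne.symm hvy, mem_filter.2 ⟨mem_univ _, by omega, hyE⟩⟩)
  have hcard : #(strandedVertices E FE FA') ≤ #(strandedVertices E FE FA) :=
    (card_le_card hsub).trans <| (card_insert_le _ _).trans_eq (card_erase_add_one hv)
  refine ⟨FA', ⟨hmax', fun FE'' FA'' hH => hcard.trans (hmin FE'' FA'' hH)⟩, ?_⟩
  by_contra hw
  have hlt := card_lt_card <| ((subset_insert_iff_of_notMem hw).1 hsub).trans_ssubset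
    (erase_ssubset hv)
  exact absurd (hmin FE FA' hmax') (not_le.2 hlt)

lemma IsOptimalMatchingForest.notMem_strandedVertices {FE : Finset (Sym2 V)}
    {u v : V} (hu : ∃ e ∈ E, u ∈ e) (huv : arcReach A u v) :
    ∀ {FA}, IsOptimalMatchingForest E A FE FA → v ∉ strandedVertices E FE FA := by
  induction huv with
  | refl =>
    intro FA _ hu'
    obtain ⟨e, he, hue⟩ := hu
    exact (mem_filter.1 hu').2.2 e he hue
  | tail _ hwv ih =>
    intro FA hF hv
    obtain ⟨FA', hF', hw⟩ := hF.exists_mem_strandedVertices_of_arc hwv hv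
    exact ih hF' hw

end Optimal

theorem exists_max_matching_forest_uncovered_incident_to_edge_general
    (E : Finset (Sym2 V)) (A : Finset (V × V))
    (hcov : ∃ FE FA, FE ⊆ E ∧ FA ⊆ A ∧ IsMixedEdgeCover FE FA) :
    ∃ FE FA, FE ⊆ E ∧ FA ⊆ A ∧ IsMatchingForest FE FA ∧
      (∀ FE' FA', FE' ⊆ E → FA' ⊆ A → IsMatchingForest FE' FA' →
        mixSize FE' FA' ≤ mixSize FE FA) ∧
      ∀ v : V, edgeCoverCount FE v + arcCoverCount FA v = 0 → ∃ e ∈ E, v ∈ e := by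
  obtain ⟨FE, FA, hF⟩ := exists_isOptimalMatchingForest E A
  obtain ⟨hFE, hFA, hmf, hmax⟩ := hF.1
  obtain ⟨CE, CA, hCE, hCA, hC⟩ := hcov
  refine ⟨FE, FA, hFE, hFA, hmf, hmax, fun v hv => ?_⟩
  by_contra hvE
  obtain ⟨u, ⟨e, he, hue⟩, hu⟩ := hC v
  refine IsOptimalMatchingForest.notMem_strandedVertices ⟨e, hCE he, hue⟩
    (Relation.ReflTransGen.mono (fun _ _ h => hCA h) _ _ hu) hF ?_
  exact mem_filter.2 ⟨mem_univ _, hv, fun e he hve => hvE ⟨e, he, hve⟩⟩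

theorem exists_max_matching_forest_uncovered_incident_to_edge
    (E : Finset (Sym2 V)) (A : Finset (V × V))
    (hE : ∀ e ∈ E, ¬ e.IsDiag) (hA : ∀ a ∈ A, a.1 ≠ a.2)
    (hcov : ∃ FE FA, FE ⊆ E ∧ FA ⊆ A ∧ IsMixedEdgeCover FE FA) :
    ∃ FE FA, FE ⊆ E ∧ FA ⊆ A ∧ IsMatchingForest FE FA ∧
      (∀ FE' FA', FE' ⊆ E → FA' ⊆ A → IsMatchingForest FE' FA' →
        mixSize FE' FA' ≤ mixSize FE FA) ∧
      ∀ v : V, edgeCoverCount FE v + arcCoverCount FA v = 0 → ∃ e ∈ E, v ∈ e :=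
  exists_max_matching_forest_uncovered_incident_to_edge_general E A hcov
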